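/- arXiv:1805.12500 — 4 statements merged into one kernel-verified Lean document; each statement's English description precedes it below -/
import Mathlib

section
/- Let m ≥ 2 be a natural number, let l ∈ {2, …, m}, and let i₁, …, i_l be natural numbers such that m^{i₁} + ⋯ + m^{i_{l−1}} = (l−1)·m^{i_l}. Then i₁ = i₂ = ⋯ = i_l. -/
/-! Put `e = i l`. If some exponent on the left were below `e`, let `t` be the smallest one;
reducing the equation modulo `m ^ (t + 1)` shows that `m` divides the number of exponents equal
to `t`, which is impossible as there are only `l - 1 < m` of them. So all exponents are at least
`e`, and since the sum is `(l - 1) * m ^ e`, none can exceed `e`. -/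

open Finset

namespace Nat

variable {ι : Type*} {s : Finset ι} {f : ι → ℕ} {m : ℕ}

theorem dvd_card_filter_eq_of_pow_succ_dvd_sum {t : ℕ} (hm : 0 < m) (hle : ∀ j ∈ s, t ≤ f j)
    (hdvd : m ^ (t + 1) ∣ ∑ j ∈ s, m ^ f j) : m ∣ #{j ∈ s | f j = t} := by
  have hlow : ∑ j ∈ s with f j = t, m ^ f j = #{j ∈ s | f j = t} * m ^ t := by
    rw [sum_congr rfl fun j hj => by rw [(mem_filter.1 hj).2], sum_const, smul_eq_mul]
  have hhigh : m ^ (t + 1) ∣ ∑ j ∈ s with ¬f j = t, m ^ f j := by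
    refine dvd_sum fun j hj => pow_dvd_pow m ?_
    obtain ⟨hjs, hjt⟩ := mem_filter.1 hj
    have := hle j hjs
    omega
  rw [← sum_filter_add_sum_filter_not s (f · = t), hlow, Nat.dvd_add_left hhigh, pow_succ']
    at hdvd
  exact Nat.dvd_of_mul_dvd_mul_right (pow_pos hm t) hdvd

theorem eq_of_sum_pow_eq_card_mul_pow {e : ℕ} (hcard : #s < m)
    (h : ∑ j ∈ s, m ^ f j = #s * m ^ e) : ∀ j ∈ s, f j = e := by
  intro j hj
  have hm : 1 < m := by
    have := Finset.card_pos.2 ⟨j, hj⟩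
    omega
  have hge : ∀ k ∈ s, e ≤ f k := by
    obtain ⟨j₀, hj₀, hmin⟩ := s.exists_min_image f ⟨j, hj⟩
    suffices e ≤ f j₀ from fun k hk => this.trans (hmin k hk)
    by_contra! hlt
    have hdvd : m ^ (f j₀ + 1) ∣ ∑ k ∈ s, m ^ f k := h ▸ (pow_dvd_pow m hlt).mul_left _
    have hpos : 0 < #{k ∈ s | f k = f j₀} :=
      Finset.card_pos.2 ⟨j₀, mem_filter.2 ⟨hj₀, rfl⟩⟩
    have := Nat.le_of_dvd hpos (dvd_card_filter_eq_of_pow_succ_dvd_sum (by omega) hmin hdvd)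
    have := card_filter_le s (f · = f j₀)
    omega
  by_contra hne
  have hlt : ∑ k ∈ s, m ^ e < ∑ k ∈ s, m ^ f k :=
    sum_lt_sum (fun k hk => pow_le_pow_right₀ hm.le (hge k hk))
      ⟨j, hj, pow_lt_pow_right₀ hm (lt_of_le_of_ne (hge j hj) (Ne.symm hne))⟩
  rw [sum_const, smul_eq_mul, h] at hlt
  exact lt_irrefl _ hlt

end Nat

theorem stmt_0_general (m l : ℕ) (hlm : l ≤ m) (i : ℕ → ℕ)
    (h : ∑ j ∈ Finset.Ico 1 l, m ^ i j = (l - 1) * m ^ i l) :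
    ∀ j ∈ Finset.Icc 1 l, ∀ k ∈ Finset.Icc 1 l, i j = i k := by
  have heq_last : ∀ j ∈ Icc 1 l, i j = i l := by
    intro j hj
    obtain ⟨h1, h2⟩ := mem_Icc.1 hj
    rcases h2.lt_or_eq with hlt | rfl
    · have hcard : #(Ico 1 l) < m := by
        rw [Nat.card_Ico]
        omega
      exact Nat.eq_of_sum_pow_eq_card_mul_pow hcard (by rwa [Nat.card_Ico]) j
        (mem_Ico.2 ⟨h1, hlt⟩)
    · rfl
  intro j hj k hk
  rw [heq_last j hj, heq_last k hk]

/-- Arithmetic lemma: if `m ≥ 2`, `2 ≤ l ≤ m` and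
`m^{i 1} + ⋯ + m^{i (l-1)} = (l-1) * m^{i l}`, then `i 1 = ⋯ = i l`. -/
theorem stmt_0 (m l : ℕ) (hm : 2 ≤ m) (hl2 : 2 ≤ l) (hlm : l ≤ m) (i : ℕ → ℕ)
    (h : ∑ j ∈ Finset.Ico 1 l, m ^ i j = (l - 1) * m ^ i l) :
    ∀ j ∈ Finset.Icc 1 l, ∀ k ∈ Finset.Icc 1 l, i j = i k :=
  stmt_0_general m l hlm i h
end

section
/- For every n there exists a choice of signs ε_{i,j} ∈ {−1,1} (1 ≤ i,j ≤ n) such that sup_{ζ ∈ [−1,1]^n} sup_{w ∈ [−1,1]^n} |Σ_{i,j=1}^n ζ_j w_i ε_{i,j}| ≤ C n^{3/2}, where C is an absolute constant. -/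
open Finset

/-! The signs are taken from a Sylvester–Hadamard (Walsh) matrix of size `2^d`, `n ≤ 2^d ≤ 2n`,
so no randomness is needed. Its columns are orthogonal of squared length `2^d`, so for
`|ζ_j| ≤ 1` the vector `s = Hζ` satisfies `‖s‖₂² = 2^d ‖ζ‖₂² ≤ 2^d n`. Bounding the form by
`‖s‖₁` and using Cauchy–Schwarz gives `‖s‖₁ ≤ 2^{d/2} ‖s‖₂ ≤ 2^d √n ≤ 2 n^{3/2}`. -/

/-- The Walsh character `(-1)^⟨x, y⟩` on the Boolean cube `ι → Bool`. -/
def walsh {ι : Type*} [Fintype ι] (x y : ι → Bool) : ℝ :=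
  ∏ k, if x k && y k then -1 else 1

section Walsh

variable {ι : Type*} [Fintype ι]

lemma walsh_eq_one_or_eq_neg_one (x y : ι → Bool) : walsh x y = 1 ∨ walsh x y = -1 := by
  simp only [walsh, prod_ite, prod_const, one_pow, mul_one]
  exact neg_one_pow_eq_or ℝ _

lemma sum_walsh_mul_walsh [DecidableEq ι] (y y' : ι → Bool) :
    ∑ x : ι → Bool, walsh x y * walsh x y' = if y = y' then 2 ^ Fintype.card ι else 0 := by
  have factor (k : ι) : ∑ b : Bool, (if b && y k then (-1 : ℝ) else 1) *
      (if b && y' k then -1 else 1) = if y k = y' k then 2 else 0 := by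
    cases y k <;> cases y' k <;> norm_num
  simp only [walsh, ← prod_mul_distrib]
  rw [← Fintype.prod_sum fun k b => (if b && y k then (-1 : ℝ) else 1) *
    (if b && y' k then -1 else 1)]
  simp only [factor]
  split_ifs with h
  · simp [h]
  · obtain ⟨k, hk⟩ := Function.ne_iff.mp h
    exact prod_eq_zero (mem_univ k) (if_neg hk)

lemma sum_sq_sum_mul_walsh [DecidableEq ι] {κ : Type*} [Fintype κ] (e : κ ↪ (ι → Bool))
    (ζ : κ → ℝ) :
    ∑ x : ι → Bool, (∑ j, ζ j * walsh x (e j)) ^ 2 = 2 ^ Fintype.card ι * ∑ j, ζ j ^ 2 := by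
  calc ∑ x : ι → Bool, (∑ j, ζ j * walsh x (e j)) ^ 2
      = ∑ j, ∑ j', ζ j * ζ j' * ∑ x : ι → Bool, walsh x (e j) * walsh x (e j') := by
        simp_rw [sq, sum_mul_sum, mul_sum]
        rw [sum_comm]
        refine sum_congr rfl fun j _ => ?_
        rw [sum_comm]
        exact sum_congr rfl fun j' _ => sum_congr rfl fun x _ => by ring
    _ = 2 ^ Fintype.card ι * ∑ j, ζ j ^ 2 := by
        classical
        simp [sum_walsh_mul_walsh, e.injective.eq_iff, mul_sum, sq, mul_comm]

end Walsh

lemma sum_abs_le_sqrt_card_mul_sqrt_sum_sq {α : Type*} [Fintype α] (f : α → ℝ) :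
    ∑ x, |f x| ≤ √(Fintype.card α) * √(∑ x, f x ^ 2) := by
  simpa [mul_comm] using Real.sum_mul_le_sqrt_mul_sqrt univ (fun x => |f x|) (fun _ => 1)

lemma abs_sum_sum_mul_le_sum_abs {κ : Type*} [Fintype κ] (ζ w : κ → ℝ) (a : κ → κ → ℝ)
    (hw : ∀ i, |w i| ≤ 1) : |∑ i, ∑ j, ζ j * w i * a i j| ≤ ∑ i, |∑ j, ζ j * a i j| := by
  calc |∑ i, ∑ j, ζ j * w i * a i j| = |∑ i, w i * ∑ j, ζ j * a i j| := by
        simp only [mul_sum]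
        congr 1
        exact sum_congr rfl fun i _ => sum_congr rfl fun j _ => by ring
    _ ≤ ∑ i, |w i * ∑ j, ζ j * a i j| := abs_sum_le_sum_abs _ _
    _ ≤ ∑ i, |∑ j, ζ j * a i j| := by
        refine sum_le_sum fun i _ => ?_
        rw [abs_mul]
        exact mul_le_of_le_one_left (abs_nonneg _) (hw i)

theorem abs_sum_sum_mul_walsh_le {ι κ : Type*} [Fintype ι] [DecidableEq ι] [Fintype κ]
    (e : κ ↪ (ι → Bool)) (ζ w : κ → ℝ) (hζ : ∀ j, |ζ j| ≤ 1) (hw : ∀ i, |w i| ≤ 1) :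
    |∑ i, ∑ j, ζ j * w i * walsh (e i) (e j)| ≤ 2 ^ Fintype.card ι * √(Fintype.card κ) := by
  set s : (ι → Bool) → ℝ := fun x => ∑ j, ζ j * walsh x (e j)
  have hs : ∑ x, s x ^ 2 ≤ 2 ^ Fintype.card ι * Fintype.card κ := by
    rw [sum_sq_sum_mul_walsh]
    gcongr
    simpa using sum_le_card_nsmul univ (fun j => ζ j ^ 2) 1
      fun j _ => (sq_le_one_iff_abs_le_one _).mpr (hζ j)
  calc |∑ i, ∑ j, ζ j * w i * walsh (e i) (e j)| ≤ ∑ i, |s (e i)| :=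
        abs_sum_sum_mul_le_sum_abs ζ w _ hw
    _ ≤ ∑ x, |s x| := by
        rw [← sum_map univ e fun x => |s x|]
        exact sum_le_sum_of_subset_of_nonneg (subset_univ _) fun x _ _ => abs_nonneg _
    _ ≤ √(Fintype.card (ι → Bool)) * √(∑ x, s x ^ 2) := sum_abs_le_sqrt_card_mul_sqrt_sum_sq s
    _ ≤ √(2 ^ Fintype.card ι) * √(2 ^ Fintype.card ι * Fintype.card κ) := by
        rw [Fintype.card_fun, Fintype.card_bool]
        push_cast
        gcongr
    _ = 2 ^ Fintype.card ι * √(Fintype.card κ) := by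
        rw [Real.sqrt_mul (by positivity), ← mul_assoc, Real.mul_self_sqrt (by positivity)]

lemma exists_le_two_pow_and_two_pow_mul_sqrt_le (n : ℕ) :
    ∃ d : ℕ, n ≤ 2 ^ d ∧ (2 : ℝ) ^ d * √n ≤ 2 * (n : ℝ) ^ ((3 : ℝ) / 2) := by
  rcases eq_or_ne n 0 with rfl | hn
  · exact ⟨0, by simp, by simp⟩
  refine ⟨Nat.log 2 n + 1, (Nat.lt_pow_succ_log_self one_lt_two n).le, ?_⟩
  have hpow : (2 : ℝ) ^ (Nat.log 2 n + 1) ≤ 2 * n := by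
    rw [pow_succ, mul_comm]
    gcongr
    exact_mod_cast Nat.pow_log_le_self 2 hn
  have hrpow : (n : ℝ) ^ ((3 : ℝ) / 2) = n * √n := by
    rw [show (3 : ℝ) / 2 = 1 + 1 / 2 by norm_num, Real.rpow_add' (by positivity) (by norm_num),
      Real.rpow_one, ← Real.sqrt_eq_rpow]
  rw [hrpow, ← mul_assoc]
  gcongr

/-- Bilinear Kahane–Salem–Zygmund inequality: there is an absolute constant `C` such that for
every `n` there are signs `ε_{i,j}` whose bilinear form on `ℓ_∞^n × ℓ_∞^n` has norm `≤ C n^{3/2}`. -/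
theorem stmt_5 :
    ∃ C : ℝ, 0 < C ∧ ∀ n : ℕ, ∃ ε : Fin n → Fin n → ℝ,
      (∀ i j, ε i j = 1 ∨ ε i j = -1) ∧
      ∀ ζ w : Fin n → ℝ, (∀ j, |ζ j| ≤ 1) → (∀ i, |w i| ≤ 1) →
        |∑ i, ∑ j, ζ j * w i * ε i j| ≤ C * (n : ℝ) ^ ((3 : ℝ) / 2) := by
  refine ⟨2, two_pos, fun n => ?_⟩
  obtain ⟨d, hnd, hbound⟩ := exists_le_two_pow_and_two_pow_mul_sqrt_le n
  obtain ⟨e⟩ : Nonempty (Fin n ↪ (Fin d → Bool)) :=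
    Function.Embedding.nonempty_of_card_le (by simpa using hnd)
  refine ⟨fun i j => walsh (e i) (e j), fun i j => walsh_eq_one_or_eq_neg_one _ _,
    fun ζ w hζ hw => ?_⟩
  refine (abs_sum_sum_mul_walsh_le e ζ w hζ hw).trans ?_
  simpa using hbound
end

section
/- Let α ∈ ℝ and let i₁, …, i_m be elements of {1,…,n} with m ≥ 2. If for all indices (i₁,…,i_m) ∈ {1,…,n}^m one averages e^{i(m^{i₁}+⋯+m^{i_{m−1}}−(m−1)m^{i_m})α} over α ∈ [0,2π] (with normalized measure dα/2π), the result is 1 when i₁ = ⋯ = i_m and 0 otherwise. -/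
/-!
The integrand is the character `α ↦ e^{iKα}` with integer frequency `K`, whose normalized integral
over a period is `1` for `K = 0` and `0` otherwise. The frequency vanishes iff the
`m - 1` powers `m ^ i j` (`j < m`) sum to `(m - 1) m ^ {i m}`; since there are fewer than `m` of them,
no exponent can exceed `i m`, and then equality forces every exponent to equal `i m`.
-/

open Finset

theorem sum_pow_eq_card_mul_pow_iff {ι : Type*} {s : Finset ι} {b k : ℕ} (e : ι → ℕ)
    (hs : #s < b) :
    ∑ j ∈ s, b ^ e j = #s * b ^ k ↔ ∀ j ∈ s, e j = k := by
  refine ⟨fun h => ?_, fun h => by rw [sum_congr rfl fun j hj => by rw [h j hj], sum_const, smul_eq_mul]⟩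
  rcases s.eq_empty_or_nonempty with rfl | hne
  · simp
  have hb : 2 ≤ b := by have := hne.card_pos; omega
  -- `#s < b` makes a single term `b ^ (k + 1)` already exceed the right-hand side.
  have hle : ∀ j ∈ s, e j ≤ k := by
    intro j hj
    by_contra! hk
    have : #s * b ^ k < ∑ j ∈ s, b ^ e j :=
      calc #s * b ^ k < b * b ^ k := by gcongr
        _ = b ^ (k + 1) := by ring
        _ ≤ b ^ e j := Nat.pow_le_pow_right (by omega) hk
        _ ≤ ∑ j ∈ s, b ^ e j := single_le_sum (f := fun j => b ^ e j) (fun _ _ => Nat.zero_le _) hj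
    omega
  rw [← smul_eq_mul, ← sum_const, sum_eq_sum_iff_of_le fun j hj =>
    Nat.pow_le_pow_right (by omega) (hle j hj)] at h
  exact fun j hj => Nat.pow_right_injective hb (h j hj)

theorem one_div_two_pi_mul_integral_exp_I_mul_int_mul (k : ℤ) :
    (1 / (2 * Real.pi) : ℂ) * ∫ α in (0:ℝ)..(2 * Real.pi), Complex.exp (Complex.I * k * α)
      = if k = 0 then 1 else 0 := by
  have hπ : (Real.pi : ℂ) ≠ 0 := Complex.ofReal_ne_zero.mpr Real.pi_ne_zero
  split_ifs with hk
  · subst hk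
    simp only [Int.cast_zero, mul_zero, zero_mul, Complex.exp_zero, intervalIntegral.integral_const,
      sub_zero, Complex.real_smul, Complex.ofReal_mul, Complex.ofReal_ofNat, mul_one]
    field_simp
  · have hc : Complex.I * k ≠ 0 := mul_ne_zero Complex.I_ne_zero (Int.cast_ne_zero.mpr hk)
    rw [integral_exp_mul_complex hc]
    have hperiod : Complex.I * k * ((2 * Real.pi : ℝ) : ℂ) = k * (2 * Real.pi * Complex.I) := by
      push_cast; ring
    rw [hperiod, Complex.exp_int_mul_two_pi_mul_I]
    simp

theorem forall_mem_forall_mem_eq_iff {ι α : Type*} {s : Finset ι} {f : ι → α} {a : ι}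
    (ha : a ∈ s) : (∀ j ∈ s, ∀ k ∈ s, f j = f k) ↔ ∀ j ∈ s, f j = f a :=
  ⟨fun h j hj => h j hj a ha, fun h j hj k hk => (h j hj).trans (h k hk).symm⟩

open scoped Classical in
theorem stmt_10_general (m : ℕ) (hm : 2 ≤ m) (i : ℕ → ℕ) :
    (1 / (2 * Real.pi) : ℂ) *
        ∫ α in (0:ℝ)..(2 * Real.pi),
          Complex.exp (Complex.I *
            ((((∑ j ∈ Finset.Ico 1 m, (m : ℤ) ^ i j) - ((m : ℤ) - 1) * (m : ℤ) ^ i m : ℤ)) : ℂ) *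
            (α : ℂ))
      = if ∀ j ∈ Finset.Icc 1 m, ∀ k ∈ Finset.Icc 1 m, i j = i k then 1 else 0 := by
  have hcard : #(Ico 1 m) < m := by rw [Nat.card_Ico]; omega
  have hfreq : (∑ j ∈ Ico 1 m, (m : ℤ) ^ i j) - ((m : ℤ) - 1) * (m : ℤ) ^ i m = 0 ↔
      ∀ j ∈ Ico 1 m, i j = i m := by
    rw [sub_eq_zero, ← sum_pow_eq_card_mul_pow_iff i hcard, Nat.card_Ico, ← Nat.cast_inj (R := ℤ)]
    push_cast [show 1 ≤ m by omega]
    rfl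
  have hequal : (∀ j ∈ Icc 1 m, ∀ k ∈ Icc 1 m, i j = i k) ↔ ∀ j ∈ Ico 1 m, i j = i m := by
    rw [forall_mem_forall_mem_eq_iff (right_mem_Icc.mpr (by omega)),
      ← Ico_insert_right (by omega), forall_mem_insert]
    exact and_iff_right rfl
  rw [one_div_two_pi_mul_integral_exp_I_mul_int_mul]
  simp only [hfreq, hequal]

open scoped Classical in
/-- Orthogonality of characters plus the arithmetic lemma: averaging
`e^{i(m^{i₁}+⋯+m^{i_{m-1}}-(m-1)m^{i_m})α}` over `α ∈ [0,2π]` gives `1` iff all `i_j` coincide,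
and `0` otherwise. -/
theorem stmt_10 (m n : ℕ) (hm : 2 ≤ m) (i : ℕ → ℕ)
    (hi : ∀ j ∈ Finset.Icc 1 m, i j ∈ Finset.Icc 1 n) :
    (1 / (2 * Real.pi) : ℂ) *
        ∫ α in (0:ℝ)..(2 * Real.pi),
          Complex.exp (Complex.I *
            ((((∑ j ∈ Finset.Ico 1 m, (m : ℤ) ^ i j) - ((m : ℤ) - 1) * (m : ℤ) ^ i m : ℤ)) : ℂ) *
            (α : ℂ))
      = if ∀ j ∈ Finset.Icc 1 m, ∀ k ∈ Finset.Icc 1 m, i j = i k then 1 else 0 :=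
  stmt_10_general m hm i
end

section
/- Fix q ≥ 2 and r ∈ (0,1). If Z is a Banach space with cotype q and m ≥ q/r, then every bounded m-linear form T : Z × ⋯ × Z → 𝕂 is absolutely (r,1)-summing: there is C with (Σ_n |T(x_n(1),…,x_n(m))|^r)^{1/r} ≤ C ω₁(x(1))⋯ω₁(x(m)) for all weakly 1-summable sequences x(j) in Z. -/
open scoped BigOperators

/-- `Z` has cotype `q`. -/
def HasCotype (Z : Type*) [NormedAddCommGroup Z] (q : ℝ) : Prop :=
  ∃ C : ℝ, 0 < C ∧ ∀ (n : ℕ) (x : Fin n → Z),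
    (∑ i, ‖x i‖ ^ q) ^ (1 / q) ≤
      C * ((∑ ε : Fin n → Bool, ‖∑ i, (if ε i then x i else -x i)‖ ^ (2 : ℝ)) / 2 ^ n)
        ^ (1 / (2 : ℝ))

/-- Weak `ℓ₁` norm of a finite family. -/
noncomputable def weakL1 {W : Type*} [NormedAddCommGroup W] [NormedSpace ℝ W]
    {n : ℕ} (x : Fin n → W) : ℝ :=
  ⨆ f : {f : W →L[ℝ] ℝ // ‖f‖ ≤ 1}, ∑ i, |f.1 (x i)|

/-!
Every sign sum `∑ ±xᵢ` has norm at most `ω₁(x)`, so the cotype inequality bounds the `ℓ_q` norm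
of `(‖xᵢ‖)` by a multiple of `ω₁(x)`. If rows `b_j` lie in the unit ball of `ℓ_q` and
`q ≤ r m`, then `b_{j,i} ≤ 1` and AM-GM give
`∏_j b_{j,i}^r ≤ (1/m) ∑_j b_{j,i}^{rm} ≤ (1/m) ∑_j b_{j,i}^q`, and summing over `i` yields
`∑_i ∏_j b_{j,i}^r ≤ 1`. By homogeneity `∑_i ∏_j ‖x_j(i)‖^r ≤ ∏_j ‖x_j‖_q^r`, and
`|T(x)| ≤ ‖T‖ ∏_j ‖x_j‖` finishes the proof.
-/

open Finset

section WeakL1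

variable {W : Type*} [NormedAddCommGroup W] [NormedSpace ℝ W] {n : ℕ}

theorem sum_abs_apply_le_weakL1 (x : Fin n → W) {f : W →L[ℝ] ℝ} (hf : ‖f‖ ≤ 1) :
    ∑ i, |f (x i)| ≤ weakL1 x := by
  refine le_ciSup (f := fun f : {f : W →L[ℝ] ℝ // ‖f‖ ≤ 1} => ∑ i, |f.1 (x i)|)
    ⟨∑ i, ‖x i‖, ?_⟩ ⟨f, hf⟩
  rintro _ ⟨g, rfl⟩
  refine sum_le_sum fun i _ => ?_
  calc |g.1 (x i)| ≤ ‖g.1‖ * ‖x i‖ := g.1.le_opNorm (x i)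
    _ ≤ ‖x i‖ := mul_le_of_le_one_left (norm_nonneg _) g.2

theorem weakL1_nonneg (x : Fin n → W) : 0 ≤ weakL1 x :=
  (sum_nonneg fun i _ => abs_nonneg _).trans (sum_abs_apply_le_weakL1 x (f := 0) (by simp))

theorem norm_sum_signs_le_weakL1 (x : Fin n → W) (ε : Fin n → Bool) :
    ‖∑ i, (if ε i then x i else -x i)‖ ≤ weakL1 x := by
  obtain ⟨f, hf, hfx⟩ := exists_dual_vector'' ℝ (∑ i, (if ε i then x i else -x i))
  calc ‖∑ i, (if ε i then x i else -x i)‖ = f (∑ i, (if ε i then x i else -x i)) := by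
        simpa using hfx.symm
    _ ≤ ∑ i, |f (x i)| := by
        rw [map_sum]
        gcongr with i
        split_ifs
        · exact le_abs_self _
        · simpa using neg_le_abs (f (x i))
    _ ≤ weakL1 x := sum_abs_apply_le_weakL1 x hf

end WeakL1

theorem HasCotype.exists_sum_rpow_le_weakL1 {Z : Type*} [NormedAddCommGroup Z]
    [NormedSpace ℝ Z] {q : ℝ} (hZ : HasCotype Z q) (hq : 0 < q) :
    ∃ K : ℝ, 0 < K ∧ ∀ (n : ℕ) (x : Fin n → Z), ∑ i, ‖x i‖ ^ q ≤ (K * weakL1 x) ^ q := by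
  obtain ⟨K, hK, hcot⟩ := hZ
  refine ⟨K, hK, fun n x => ?_⟩
  have hw := weakL1_nonneg x
  have hmean : (∑ ε : Fin n → Bool, ‖∑ i, (if ε i then x i else -x i)‖ ^ (2 : ℝ)) / 2 ^ n
      ≤ weakL1 x ^ (2 : ℝ) := by
    rw [div_le_iff₀ (by positivity)]
    calc ∑ ε : Fin n → Bool, ‖∑ i, (if ε i then x i else -x i)‖ ^ (2 : ℝ)
        ≤ ∑ _ε : Fin n → Bool, weakL1 x ^ (2 : ℝ) := by
          gcongr with ε
          exact norm_sum_signs_le_weakL1 x ε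
      _ = weakL1 x ^ (2 : ℝ) * 2 ^ n := by simp [mul_comm]
  have hroot : (∑ i, ‖x i‖ ^ q) ^ q⁻¹ ≤ K * weakL1 x := by
    refine (one_div q ▸ hcot n x).trans (mul_le_mul_of_nonneg_left ?_ hK.le)
    calc _ ≤ (weakL1 x ^ (2 : ℝ)) ^ (1 / (2 : ℝ)) := by gcongr
      _ = weakL1 x := by rw [← Real.rpow_mul hw]; norm_num
  exact (Real.rpow_inv_le_iff_of_pos (sum_nonneg fun i _ => by positivity)
    (by positivity) hq).1 hroot

section SumProdRpow

variable {ι κ : Type*} [Fintype ι] [Fintype κ] {q r : ℝ}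

theorem le_of_sum_rpow_le_rpow {a : ι → ℝ} {c : ℝ} (ha : ∀ i, 0 ≤ a i) (hc : 0 ≤ c)
    (hq : 0 < q) (hac : ∑ i, a i ^ q ≤ c ^ q) (i : ι) : a i ≤ c := by
  refine (Real.rpow_le_rpow_iff (ha i) hc hq).1 (le_trans ?_ hac)
  exact single_le_sum (fun i _ => Real.rpow_nonneg (ha i) q) (mem_univ i)

theorem sum_prod_rpow_le_one (hq : 0 < q) (hqr : q ≤ r * Fintype.card κ)
    {b : κ → ι → ℝ} (hb : ∀ j i, 0 ≤ b j i) (hb1 : ∀ j, ∑ i, b j i ^ q ≤ 1) :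
    ∑ i, ∏ j, b j i ^ r ≤ 1 := by
  set m : ℝ := (Fintype.card κ : ℝ)
  have hr : 0 < r := pos_of_mul_pos_left (hq.trans_le hqr) (Nat.cast_nonneg _)
  have hm : 0 < m := pos_of_mul_pos_right (hq.trans_le hqr) hr.le
  have hb_le_one : ∀ j i, b j i ≤ 1 := fun j =>
    le_of_sum_rpow_le_rpow (hb j) zero_le_one hq (by rw [Real.one_rpow]; exact hb1 j)
  have hamgm : ∀ i, ∏ j, b j i ^ r ≤ (∑ j, b j i ^ q) / m := by
    intro i
    calc ∏ j, b j i ^ r = ∏ j, (b j i ^ (r * m)) ^ (1 / m) := by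
          refine prod_congr rfl fun j _ => ?_
          rw [← Real.rpow_mul (hb j i), mul_one_div, mul_div_cancel_right₀ _ hm.ne']
      _ ≤ ∑ j, 1 / m * b j i ^ (r * m) :=
          Real.geom_mean_le_arith_mean_weighted _ _ _ (fun _ _ => by positivity)
            (by rw [sum_const, card_univ, nsmul_eq_mul, mul_one_div_cancel hm.ne']) fun j _ => Real.rpow_nonneg (hb j i) _
      _ ≤ ∑ j, 1 / m * b j i ^ q := by
          refine sum_le_sum fun j _ => mul_le_mul_of_nonneg_left ?_ (by positivity)
          exact Real.rpow_le_rpow_of_exponent_ge' (hb j i) (hb_le_one j i) hq.le hqr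
      _ = (∑ j, b j i ^ q) / m := by rw [← mul_sum, one_div_mul_eq_div]
  calc ∑ i, ∏ j, b j i ^ r ≤ ∑ i, (∑ j, b j i ^ q) / m := sum_le_sum fun i _ => hamgm i
    _ = (∑ j, ∑ i, b j i ^ q) / m := by rw [← sum_div, sum_comm]
    _ ≤ (∑ _j : κ, (1 : ℝ)) / m := by gcongr with j; exact hb1 j
    _ = 1 := by simp [m, hm.ne']

theorem sum_prod_rpow_le_prod_rpow (hq : 0 < q) (hqr : q ≤ r * Fintype.card κ)
    {a : κ → ι → ℝ} {c : κ → ℝ} (ha : ∀ j i, 0 ≤ a j i) (hc : ∀ j, 0 ≤ c j)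
    (hac : ∀ j, ∑ i, a j i ^ q ≤ c j ^ q) :
    ∑ i, ∏ j, a j i ^ r ≤ ∏ j, c j ^ r := by
  have hr : 0 < r := pos_of_mul_pos_left (hq.trans_le hqr) (Nat.cast_nonneg _)
  by_cases hc0 : ∃ j, c j = 0
  · obtain ⟨j₀, hj₀⟩ := hc0
    have ha0 : ∀ i, a j₀ i = 0 := fun i =>
      le_antisymm (hj₀ ▸ le_of_sum_rpow_le_rpow (ha j₀) (hc j₀) hq (hac j₀) i) (ha j₀ i)
    calc ∑ i, ∏ j, a j i ^ r = 0 := sum_eq_zero fun i _ =>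
          prod_eq_zero (mem_univ j₀) (by rw [ha0 i, Real.zero_rpow hr.ne'])
      _ ≤ ∏ j, c j ^ r := prod_nonneg fun j _ => Real.rpow_nonneg (hc j) r
  push Not at hc0
  have hcpos : ∀ j, 0 < c j := fun j => (hc j).lt_of_ne' (hc0 j)
  have hnormalized : ∑ i, ∏ j, (a j i / c j) ^ r ≤ 1 := by
    refine sum_prod_rpow_le_one hq hqr (fun j i => div_nonneg (ha j i) (hc j)) fun j => ?_
    simp_rw [Real.div_rpow (ha j _) (hc j), ← sum_div]
    exact div_le_one_of_le₀ (hac j) (Real.rpow_nonneg (hc j) q)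
  calc ∑ i, ∏ j, a j i ^ r = (∏ j, c j ^ r) * ∑ i, ∏ j, (a j i / c j) ^ r := by
        rw [mul_sum]
        refine sum_congr rfl fun i _ => ?_
        rw [← prod_mul_distrib]
        refine prod_congr rfl fun j _ => ?_
        rw [Real.div_rpow (ha j i) (hc j), mul_div_cancel₀ _ (Real.rpow_pos_of_pos (hcpos j) r).ne']
    _ ≤ ∏ j, c j ^ r := mul_le_of_le_one_right (prod_nonneg fun j _ => Real.rpow_nonneg (hc j) r) hnormalized

end SumProdRpow

theorem ContinuousMultilinearMap.rpow_sum_norm_rpow_le {𝕜 ι κ G : Type*}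
    [NontriviallyNormedField 𝕜] [Fintype ι] [Fintype κ] {E : κ → Type*}
    [∀ j, SeminormedAddCommGroup (E j)] [∀ j, NormedSpace 𝕜 (E j)]
    [SeminormedAddCommGroup G] [NormedSpace 𝕜 G] {q r : ℝ} (hq : 0 < q)
    (hqr : q ≤ r * Fintype.card κ) (T : ContinuousMultilinearMap 𝕜 E G)
    (x : ∀ j, ι → E j) {c : κ → ℝ} (hc : ∀ j, 0 ≤ c j)
    (hxc : ∀ j, ∑ i, ‖x j i‖ ^ q ≤ c j ^ q) :
    (∑ i, ‖T fun j => x j i‖ ^ r) ^ (1 / r) ≤ ‖T‖ * ∏ j, c j := by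
  have hr : 0 < r := pos_of_mul_pos_left (hq.trans_le hqr) (Nat.cast_nonneg _)
  rw [one_div, Real.rpow_inv_le_iff_of_pos (sum_nonneg fun i _ => by positivity)
    (mul_nonneg (norm_nonneg T) (prod_nonneg fun j _ => hc j)) hr]
  calc ∑ i, ‖T fun j => x j i‖ ^ r ≤ ∑ i, ‖T‖ ^ r * ∏ j, ‖x j i‖ ^ r := by
        refine sum_le_sum fun i _ => ?_
        rw [Real.finsetProd_rpow _ _ (fun j _ => norm_nonneg _),
          ← Real.mul_rpow (norm_nonneg T) (prod_nonneg fun j _ => norm_nonneg _)]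
        exact Real.rpow_le_rpow (norm_nonneg _) (T.le_opNorm _) hr.le
    _ ≤ ‖T‖ ^ r * ∏ j, c j ^ r := by
        rw [← mul_sum]
        exact mul_le_mul_of_nonneg_left (sum_prod_rpow_le_prod_rpow hq hqr
          (fun j i => norm_nonneg _) hc hxc) (by positivity)
    _ = (‖T‖ * ∏ j, c j) ^ r := by
        rw [Real.finsetProd_rpow _ _ (fun j _ => hc j),
          Real.mul_rpow (norm_nonneg T) (prod_nonneg fun j _ => hc j)]

theorem stmt_15_general (q r : ℝ) (hq : 2 ≤ q) (hr0 : 0 < r)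
    (Z : Type*) [NormedAddCommGroup Z] [NormedSpace ℝ Z]
    (hZ : HasCotype Z q) (m : ℕ) (hm : q / r ≤ (m : ℝ))
    (T : ContinuousMultilinearMap ℝ (fun _ : Fin m => Z) ℝ) :
    ∃ C : ℝ, 0 < C ∧ ∀ (n : ℕ) (x : Fin m → Fin n → Z),
      (∑ i : Fin n, ‖T (fun j => x j i)‖ ^ r) ^ (1 / r) ≤ C * ∏ j, weakL1 (x j) := by
  have hq0 : 0 < q := by linarith
  have hqr : q ≤ r * Fintype.card (Fin m) := by
    rwa [Fintype.card_fin, ← div_le_iff₀' hr0]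
  obtain ⟨K, hK, hcot⟩ := hZ.exists_sum_rpow_le_weakL1 hq0
  refine ⟨(‖T‖ + 1) * K ^ m, by positivity, fun n x => ?_⟩
  calc (∑ i, ‖T fun j => x j i‖ ^ r) ^ (1 / r) ≤ ‖T‖ * ∏ j, (K * weakL1 (x j)) :=
        T.rpow_sum_norm_rpow_le hq0 hqr x (fun j => mul_nonneg hK.le (weakL1_nonneg _))
          fun j => hcot n (x j)
    _ = ‖T‖ * K ^ m * ∏ j, weakL1 (x j) := by
        rw [prod_mul_distrib, prod_const, card_univ, Fintype.card_fin, mul_assoc]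
    _ ≤ (‖T‖ + 1) * K ^ m * ∏ j, weakL1 (x j) := by
        gcongr
        · exact prod_nonneg fun j _ => weakL1_nonneg _
        · linarith

/-- Botelho: if `Z` has cotype `q` and `m ≥ q/r` with `0 < r < 1`, then every bounded
`m`-linear form on `Z^m` is absolutely `(r,1)`-summing. -/
theorem stmt_15 (q r : ℝ) (hq : 2 ≤ q) (hr0 : 0 < r) (hr1 : r < 1)
    (Z : Type*) [NormedAddCommGroup Z] [NormedSpace ℝ Z] [CompleteSpace Z]
    (hZ : HasCotype Z q) (m : ℕ) (hm : q / r ≤ (m : ℝ))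
    (T : ContinuousMultilinearMap ℝ (fun _ : Fin m => Z) ℝ) :
    ∃ C : ℝ, 0 < C ∧ ∀ (n : ℕ) (x : Fin m → Fin n → Z),
      (∑ i : Fin n, ‖T (fun j => x j i)‖ ^ r) ^ (1 / r) ≤ C * ∏ j, weakL1 (x j) :=
  stmt_15_general q r hq hr0 Z hZ m hm T
end
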